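/- arXiv:1011.3810 — 2 statements merged into one kernel-verified Lean document; each statement's English description precedes it below -/
import Mathlib

section
/- For every constant c>0 there exist constants C>0 and δ>0 such that the following holds: whenever M is even, M_1(R)≥M_1(L), d_max^4≤δ·M and M_2(R)≤c·d_max³, the probability that a uniformly random restricted pairing in M(L,R,d) contains a loop or a double pair is at most C·d_max^4/M. -/
/-!
A pairing with a loop at `p` is switched, by conjugating it with the transposition of `f p` and
a point `r` in an `R`-bucket, into a restricted pairing in which `p` is paired with `r`; recording
the ordered pair `(p, f p)` of points of one `R`-bucket makes this injective. Every such pairing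
admits at least `M₁(R) - 2` choices of `r`, so the pairings with a loop number at most
`|M(L,R,d)| M₂(R) / (M₁(R) - 2)`. A double pair `p, q ↦ a, b` (with `a`, `b` in an `R`-bucket) is
switched by two transpositions `a ↔ r`, `b ↔ s`, recording `(p, q)` and `(a, b)`; this gives at
most `|M(L,R,d)| M₂ M₂(R) / ((M₁(R) - 4)(M₁(R) - 5))` such pairings. Since `M₂ ≤ d_max M`,
`M₁(R) ≥ M / 2` and `M₂(R) = O(d_max³)`, both bounds are `O(d_max⁴ / M)` times `|M(L,R,d)|`.
-/

open Finset

namespace RandomBGraph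

/-- The type of points: bucket `i` contains `d i` labelled points. -/
abbrev Pt (n : ℕ) (d : Fin n → ℕ) := Σ i : Fin n, Fin (d i)

/-- Restricted pairings: perfect matchings (fixed-point-free involutions) of the points
in which no pair has both of its points in buckets belonging to `L`. -/
def restricted (n : ℕ) (d : Fin n → ℕ) (L : Finset (Fin n)) :
    Finset (Pt n d → Pt n d) :=
  Finset.univ.filter (fun f =>
    (∀ p, f (f p) = p) ∧ (∀ p, f p ≠ p) ∧ (∀ p : Pt n d, p.1 ∈ L → (f p).1 ∉ L))

variable {n : ℕ} {d : Fin n → ℕ}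

/-- number of loops of a pairing -/
def numLoops (f : Pt n d → Pt n d) : ℕ :=
  (Finset.univ.filter (fun p : Pt n d => (f p).1 = p.1)).card / 2

/-- number of mixed double pairs -/
def numMixedDoubles (L : Finset (Fin n)) (f : Pt n d → Pt n d) : ℕ :=
  (Finset.univ.filter (fun pq : Pt n d × Pt n d =>
    pq.1 ≠ pq.2 ∧ pq.1.1 = pq.2.1 ∧ pq.1.1 ∈ L ∧ (f pq.1).1 ∉ L ∧
      (f pq.1).1 = (f pq.2).1)).card / 2

/-- number of pure double pairs -/
def numPureDoubles (L : Finset (Fin n)) (f : Pt n d → Pt n d) : ℕ :=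
  (Finset.univ.filter (fun pq : Pt n d × Pt n d =>
    pq.1 ≠ pq.2 ∧ pq.1.1 = pq.2.1 ∧ pq.1.1 ∉ L ∧ (f pq.1).1 ∉ L ∧
      (f pq.1).1 = (f pq.2).1 ∧ (f pq.1).1 ≠ pq.1.1)).card / 4

def M (n : ℕ) (d : Fin n → ℕ) : ℕ := ∑ i, d i

def M1 (d : Fin n → ℕ) (S : Finset (Fin n)) : ℕ := ∑ i ∈ S, d i

def M2 (d : Fin n → ℕ) (S : Finset (Fin n)) : ℕ := ∑ i ∈ S, d i * (d i - 1)

def dmax (d : Fin n → ℕ) : ℕ := Finset.univ.sup d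

section Switching

variable {α β γ : Type*}

theorem card_mul_le_card_mul_of_switching
    {B A : Finset α} {T : Finset γ} (W : α → Finset β) {k : ℕ}
    (hk : ∀ f ∈ B, k ≤ #(W f)) (φ : α → β → α × γ)
    (hφ : ∀ f ∈ B, ∀ w ∈ W f, φ f w ∈ A ×ˢ T)
    (hφ_inj : ∀ f ∈ B, ∀ w ∈ W f, ∀ f' ∈ B, ∀ w' ∈ W f', φ f w = φ f' w' → f = f' ∧ w = w') :
    #B * k ≤ #A * #T :=
  calc #B * k ≤ ∑ f ∈ B, #(W f) := by simpa using card_nsmul_le_sum B (fun f => #(W f)) k hk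
    _ = #(B.sigma W) := (card_sigma B W).symm
    _ ≤ #(A ×ˢ T) := card_le_card_of_injOn (fun x => φ x.1 x.2)
        (fun x hx => hφ x.1 (mem_sigma.1 hx).1 x.2 (mem_sigma.1 hx).2)
        (fun x hx y hy hxy => by
          obtain ⟨hf, hw⟩ := hφ_inj x.1 (mem_sigma.1 hx).1 x.2 (mem_sigma.1 hx).2
            y.1 (mem_sigma.1 hy).1 y.2 (mem_sigma.1 hy).2 hxy
          exact Sigma.ext hf (heq_of_eq hw))
    _ = #A * #T := card_product A T

variable [DecidableEq α]

def swapConj (a b : α) (f : α → α) : α → α :=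
  fun x => Equiv.swap a b (f (Equiv.swap a b x))

@[simp]
theorem swapConj_swapConj (a b : α) (f : α → α) : swapConj a b (swapConj a b f) = f := by
  funext x
  simp [swapConj]

theorem swapConj_apply_of_ne {a b x : α} (f : α → α) (ha : x ≠ a) (hb : x ≠ b) :
    swapConj a b f x = Equiv.swap a b (f x) := by
  rw [swapConj, Equiv.swap_apply_of_ne_of_ne ha hb]

theorem swapConj_apply_of_apply_eq {f : α → α} {x a b : α} (hfx : f x = a) (ha : x ≠ a)
    (hb : x ≠ b) : swapConj a b f x = b := by
  rw [swapConj_apply_of_ne f ha hb, hfx, Equiv.swap_apply_left]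

end Switching

variable {L : Finset (Fin n)}

theorem mem_restricted {f : Pt n d → Pt n d} :
    f ∈ restricted n d L ↔
      (∀ p, f (f p) = p) ∧ (∀ p, f p ≠ p) ∧ (∀ p : Pt n d, p.1 ∈ L → (f p).1 ∉ L) := by
  simp [restricted]

theorem swapConj_mem_restricted {f : Pt n d → Pt n d} (hf : f ∈ restricted n d L)
    {a b : Pt n d} (ha : a.1 ∉ L) (hb : b.1 ∉ L) : swapConj a b f ∈ restricted n d L := by
  obtain ⟨hinv, hfix, hL⟩ := mem_restricted.1 hf
  refine mem_restricted.2 ⟨fun p => by simp [swapConj, hinv], fun p hp => ?_, fun p hp => ?_⟩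
  · exact hfix _ (by simpa [swapConj] using congrArg (Equiv.swap a b) hp)
  · have hpa : p ≠ a := by rintro rfl; exact ha hp
    have hpb : p ≠ b := by rintro rfl; exact hb hp
    rw [swapConj_apply_of_ne f hpa hpb, Equiv.swap_apply_def]
    split_ifs with h h'
    exacts [hb, ha, hL p hp]

variable (d) in
def ptsIn (S : Finset (Fin n)) : Finset (Pt n d) := S.sigma fun _ => univ

theorem mem_ptsIn {S : Finset (Fin n)} {p : Pt n d} : p ∈ ptsIn d S ↔ p.1 ∈ S := by
  simp [ptsIn, mem_sigma]

theorem card_ptsIn (S : Finset (Fin n)) : #(ptsIn d S) = M1 d S := by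
  simp [ptsIn, M1]

variable (d) in
def samePairs (S : Finset (Fin n)) : Finset (Pt n d × Pt n d) :=
  univ.filter fun pq => pq.1 ≠ pq.2 ∧ pq.1.1 = pq.2.1 ∧ pq.1.1 ∈ S

theorem card_samePairs_le (S : Finset (Fin n)) : #(samePairs d S) ≤ M2 d S := by
  let pairsAt : (Σ i : Fin n, Fin (d i) × Fin (d i)) → Pt n d × Pt n d :=
    fun x => (⟨x.1, x.2.1⟩, ⟨x.1, x.2.2⟩)
  have hsub : samePairs d S ⊆ (S.sigma fun _ => univ.offDiag).image pairsAt := by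
    rintro ⟨⟨i, a⟩, ⟨j, b⟩⟩ hab
    obtain ⟨hne, rfl : i = j, hi⟩ := by simpa [samePairs] using hab
    exact mem_image.2 ⟨⟨i, a, b⟩, by simpa [mem_sigma, hi] using hne, rfl⟩
  calc #(samePairs d S) ≤ #(S.sigma fun _ => univ.offDiag) :=
        (card_le_card hsub).trans card_image_le
    _ = M2 d S := by simp [M2, offDiag_card, Nat.mul_sub_one]

theorem two_le_dmax {p q : Pt n d} (hpq : p ≠ q) (hbucket : p.1 = q.1) : 2 ≤ dmax d := by
  obtain ⟨i, a⟩ := p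
  obtain ⟨j, b⟩ := q
  obtain rfl : i = j := hbucket
  have hab : (a : ℕ) ≠ b := fun h => hpq (by rw [Fin.ext h])
  have : 2 ≤ d i := by omega
  exact this.trans (le_sup (f := d) (mem_univ i))

theorem M2_le_dmax_mul_M (d : Fin n → ℕ) : M2 d univ ≤ dmax d * M n d := by
  rw [M2, M, mul_sum]
  refine sum_le_sum fun i _ => ?_
  rw [mul_comm (dmax d)]
  exact Nat.mul_le_mul_left _ ((Nat.sub_le _ _).trans (le_sup (f := d) (mem_univ i)))

theorem M_le_two_mul_M1_compl (h : M1 d L ≤ M1 d Lᶜ) : M n d ≤ 2 * M1 d Lᶜ := by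
  have := sum_add_sum_compl L d
  simp only [M1] at h ⊢
  rw [M, ← this]
  omega

abbrev HasLoop (f : Pt n d → Pt n d) : Prop := ∃ p, (f p).1 = p.1

/-- A double pair `{p, f p}, {q, f q}`, oriented so that the bucket of `f p` is not in `L`: since
no pair lies inside `L`, every double pair of a restricted pairing has such an orientation. -/
def IsDoublePair (L : Finset (Fin n)) (f : Pt n d → Pt n d) (p q : Pt n d) : Prop :=
  p ≠ q ∧ p.1 = q.1 ∧ (f p).1 = (f q).1 ∧ (f p).1 ≠ p.1 ∧ (f p).1 ∉ L

instance (L : Finset (Fin n)) (f : Pt n d → Pt n d) (p q : Pt n d) :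
    Decidable (IsDoublePair L f p q) := by
  unfold IsDoublePair; infer_instance

abbrev HasDoublePair (L : Finset (Fin n)) (f : Pt n d → Pt n d) : Prop :=
  ∃ p q, IsDoublePair L f p q

section BadPairings

variable {f : Pt n d → Pt n d}

theorem hasLoop_of_numLoops_pos (h : 0 < numLoops f) : HasLoop f := by
  obtain ⟨p, hp⟩ := card_pos.1 (h.trans_le (Nat.div_le_self _ _))
  exact ⟨p, (mem_filter.1 hp).2⟩

theorem hasDoublePair_of_numMixedDoubles_pos (h : 0 < numMixedDoubles L f) :
    HasDoublePair L f := by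
  obtain ⟨⟨p, q⟩, hpq⟩ := card_pos.1 (h.trans_le (Nat.div_le_self _ _))
  obtain ⟨hne, hbucket, hpL, hfL, hfbucket⟩ := (mem_filter.1 hpq).2
  exact ⟨p, q, hne, hbucket, hfbucket, fun h => hfL (h ▸ hpL), hfL⟩

theorem hasDoublePair_of_numPureDoubles_pos (h : 0 < numPureDoubles L f) :
    HasDoublePair L f := by
  obtain ⟨⟨p, q⟩, hpq⟩ := card_pos.1 (h.trans_le (Nat.div_le_self _ _))
  obtain ⟨hne, hbucket, -, hfL, hfbucket, hfne⟩ := (mem_filter.1 hpq).2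
  exact ⟨p, q, hne, hbucket, hfbucket, hfne, hfL⟩

theorem hasLoop_or_hasDoublePair
    (h : 0 < numLoops f ∨ 0 < numMixedDoubles L f ∨ 0 < numPureDoubles L f) :
    HasLoop f ∨ HasDoublePair L f := by
  rcases h with h | h | h
  exacts [.inl (hasLoop_of_numLoops_pos h), .inr (hasDoublePair_of_numMixedDoubles_pos h),
    .inr (hasDoublePair_of_numPureDoubles_pos h)]

theorem card_filter_bad_le (s : Finset (Pt n d → Pt n d)) :
    #(s.filter fun f => 0 < numLoops f ∨ 0 < numMixedDoubles L f ∨ 0 < numPureDoubles L f) ≤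
      #(s.filter HasLoop) + #(s.filter (HasDoublePair L)) :=
  calc _ ≤ #(s.filter fun f => HasLoop f ∨ HasDoublePair L f) :=
        card_le_card (monotone_filter_right _ fun _ _ => hasLoop_or_hasDoublePair)
    _ ≤ _ := by rw [filter_or]; exact card_union_le _ _

theorem two_le_dmax_of_hasLoop_or_hasDoublePair (hf : f ∈ restricted n d L)
    (h : HasLoop f ∨ HasDoublePair L f) : 2 ≤ dmax d := by
  rcases h with ⟨p, hp⟩ | ⟨p, q, hpq, hbucket, -⟩
  exacts [two_le_dmax ((mem_restricted.1 hf).2.1 p) hp, two_le_dmax hpq hbucket]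

end BadPairings

theorem bucket_notMem_of_loop {f : Pt n d → Pt n d} (hf : f ∈ restricted n d L) {p : Pt n d}
    (hp : (f p).1 = p.1) : p.1 ∉ L :=
  fun h => (mem_restricted.1 hf).2.2 p h (hp ▸ h)

def loopSwitches (L : Finset (Fin n)) (f : Pt n d → Pt n d) : Finset (Pt n d × Pt n d) :=
  univ.filter fun w => (f w.1).1 = w.1.1 ∧ w.2 ∈ ptsIn d Lᶜ \ {w.1, f w.1}

theorem card_loopSwitches_ge {f : Pt n d → Pt n d} {p : Pt n d} (hp : (f p).1 = p.1) :
    #(ptsIn d Lᶜ) - 2 ≤ #(loopSwitches L f) :=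
  calc #(ptsIn d Lᶜ) - 2 ≤ #(ptsIn d Lᶜ \ {p, f p}) :=
        (Nat.sub_le_sub_left card_le_two _).trans (le_card_sdiff _ _)
    _ = #({p} ×ˢ (ptsIn d Lᶜ \ {p, f p})) := by simp
    _ ≤ #(loopSwitches L f) := card_le_card fun w hw => by
        obtain ⟨rfl, hw⟩ := by simpa using mem_product.1 hw
        simpa [loopSwitches, hp] using hw

theorem card_filter_hasLoop_mul_le :
    #((restricted n d L).filter HasLoop) * (M1 d Lᶜ - 2) ≤ #(restricted n d L) * M2 d Lᶜ := by
  calc _ ≤ #(restricted n d L) * #(samePairs d Lᶜ) := by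
        rw [← card_ptsIn]
        refine card_mul_le_card_mul_of_switching (loopSwitches L) ?_
          (fun f w => (swapConj (f w.1) w.2 f, (w.1, f w.1))) ?_ ?_
        · intro f hf
          obtain ⟨-, p, hp⟩ := mem_filter.1 hf
          exact card_loopSwitches_ge hp
        · rintro f hf ⟨p, r⟩ hw
          obtain ⟨hfA, -⟩ := mem_filter.1 hf
          obtain ⟨hp, hr, -⟩ := by simpa [loopSwitches, mem_ptsIn] using hw
          have hpL := bucket_notMem_of_loop hfA hp
          refine mem_product.2 ⟨swapConj_mem_restricted hfA (hp ▸ hpL) hr, ?_⟩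
          simpa [samePairs, hp, hpL] using ((mem_restricted.1 hfA).2.1 p).symm
        · rintro f hf ⟨p, r⟩ hw f' hf' ⟨p', r'⟩ hw' heq
          obtain ⟨hg, rfl, hq⟩ := by simpa using heq
          obtain ⟨-, -, hrp, -⟩ := by simpa [loopSwitches, mem_ptsIn] using hw
          obtain ⟨-, -, hrp', -⟩ := by simpa [loopSwitches, mem_ptsIn] using hw'
          have hpq : p ≠ f p := ((mem_restricted.1 (mem_filter.1 hf).1).2.1 p).symm
          -- after the switch `p` is paired with `r`
          obtain rfl : r = r' := by
            rw [← swapConj_apply_of_apply_eq rfl hpq (Ne.symm hrp), hg,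
              swapConj_apply_of_apply_eq rfl (hq ▸ hpq) (Ne.symm hrp')]
          refine ⟨?_, rfl⟩
          rw [← swapConj_swapConj (f p) r f, hg, hq, swapConj_swapConj]
    _ ≤ _ := Nat.mul_le_mul_left _ (card_samePairs_le _)

def doubleSwitches (L : Finset (Fin n)) (f : Pt n d → Pt n d) :
    Finset ((Pt n d × Pt n d) × (Pt n d × Pt n d)) :=
  univ.filter fun w => IsDoublePair L f w.1.1 w.1.2 ∧
    w.2 ∈ (ptsIn d Lᶜ \ {w.1.1, w.1.2, f w.1.1, f w.1.2}).offDiag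

theorem card_doubleSwitches_ge {f : Pt n d → Pt n d} {p q : Pt n d}
    (hpq : IsDoublePair L f p q) :
    (#(ptsIn d Lᶜ) - 4) * (#(ptsIn d Lᶜ) - 5) ≤ #(doubleSwitches L f) := by
  set free := ptsIn d Lᶜ \ {p, q, f p, f q}
  have hfree : #(ptsIn d Lᶜ) - 4 ≤ #free :=
    (Nat.sub_le_sub_left card_le_four _).trans (le_card_sdiff _ _)
  calc (#(ptsIn d Lᶜ) - 4) * (#(ptsIn d Lᶜ) - 5) ≤ #free * (#free - 1) :=
        Nat.mul_le_mul hfree (by omega)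
    _ = #({(p, q)} ×ˢ free.offDiag) := by simp [offDiag_card, Nat.mul_sub_one]
    _ ≤ #(doubleSwitches L f) := card_le_card fun ⟨pq, rs⟩ hw => by
        rw [mem_product, mem_singleton] at hw
        obtain ⟨rfl, hw⟩ := hw
        exact mem_filter.2 ⟨mem_univ _, hpq, hw⟩

namespace IsDoublePair

variable {f : Pt n d → Pt n d} {p q r s : Pt n d}

theorem ne_apply (hf : f ∈ restricted n d L) (h : IsDoublePair L f p q) :
    p ≠ f p ∧ p ≠ f q ∧ q ≠ f p ∧ q ≠ f q ∧ f p ≠ f q := by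
  obtain ⟨hpq, hbucket, hfbucket, hne, -⟩ := h
  have hinv := (mem_restricted.1 hf).1
  refine ⟨ne_of_apply_ne Sigma.fst ?_, ne_of_apply_ne Sigma.fst ?_,
    ne_of_apply_ne Sigma.fst ?_, ne_of_apply_ne Sigma.fst ?_, fun h => hpq ?_⟩
  · exact hne.symm
  · exact hfbucket ▸ hne.symm
  · exact hbucket ▸ hne.symm
  · exact hbucket ▸ hfbucket ▸ hne.symm
  · rw [← hinv p, h, hinv]

theorem switch_apply (hf : f ∈ restricted n d L) (h : IsDoublePair L f p q)
    (hrs : (r, s) ∈ (ptsIn d Lᶜ \ {p, q, f p, f q}).offDiag) :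
    swapConj (f q) s (swapConj (f p) r f) p = r ∧
      swapConj (f q) s (swapConj (f p) r f) q = s := by
  obtain ⟨hpa, hpb, hqa, hqb, hab⟩ := h.ne_apply hf
  simp only [mem_offDiag, mem_sdiff, mem_insert, mem_singleton, not_or] at hrs
  obtain ⟨⟨-, hr⟩, ⟨-, hs⟩, hrs⟩ := hrs
  constructor
  · rw [swapConj_apply_of_ne _ hpb (Ne.symm hs.1),
      swapConj_apply_of_apply_eq rfl hpa (Ne.symm hr.1),
      Equiv.swap_apply_of_ne_of_ne hr.2.2.2 hrs]
  · refine swapConj_apply_of_apply_eq ?_ hqb (Ne.symm hs.2.1)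
    rw [swapConj_apply_of_ne _ hqa (Ne.symm hr.2.1),
      Equiv.swap_apply_of_ne_of_ne (Ne.symm hab) (Ne.symm hr.2.2.2)]

end IsDoublePair

theorem card_filter_hasDoublePair_mul_le :
    #((restricted n d L).filter (HasDoublePair L)) * ((M1 d Lᶜ - 4) * (M1 d Lᶜ - 5)) ≤
      #(restricted n d L) * (M2 d univ * M2 d Lᶜ) := by
  calc _ ≤ #(restricted n d L) * #(samePairs d univ ×ˢ samePairs d Lᶜ) := by
        rw [← card_ptsIn]
        refine card_mul_le_card_mul_of_switching (doubleSwitches L) ?_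
          (fun f w => (swapConj (f w.1.2) w.2.2 (swapConj (f w.1.1) w.2.1 f),
            (w.1, (f w.1.1, f w.1.2)))) ?_ ?_
        · intro f hf
          obtain ⟨-, p, q, hpq⟩ := mem_filter.1 hf
          exact card_doubleSwitches_ge hpq
        · rintro f hf ⟨⟨p, q⟩, ⟨r, s⟩⟩ hw
          obtain ⟨hfA, -⟩ := mem_filter.1 hf
          obtain ⟨hpq, hrs⟩ := by simpa [doubleSwitches] using hw
          obtain ⟨-, -, -, -, hab⟩ := hpq.ne_apply hfA
          obtain ⟨hne, hbucket, hfbucket, -, hL⟩ := hpq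
          have hL' : (f q).1 ∉ L := hfbucket ▸ hL
          simp only [mem_ptsIn, mem_compl] at hrs
          refine mem_product.2 ⟨swapConj_mem_restricted
            (swapConj_mem_restricted hfA hL hrs.1.1) hL' hrs.2.1.1, ?_⟩
          simp [samePairs, *]
        · rintro f hf ⟨⟨p, q⟩, ⟨r, s⟩⟩ hw f' hf' ⟨⟨p', q'⟩, ⟨r', s'⟩⟩ hw' heq
          obtain ⟨hg, ⟨rfl, rfl⟩, ha, hb⟩ := by simpa using heq
          simp only [doubleSwitches, mem_filter, mem_univ, true_and] at hw hw'
          obtain ⟨hgp, hgq⟩ := hw.1.switch_apply (mem_filter.1 hf).1 hw.2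
          obtain ⟨hgp', hgq'⟩ := hw'.1.switch_apply (mem_filter.1 hf').1 hw'.2
          rw [hg] at hgp hgq
          obtain ⟨rfl, rfl⟩ : r = r' ∧ s = s' := ⟨hgp.symm.trans hgp', hgq.symm.trans hgq'⟩
          refine ⟨?_, rfl⟩
          rw [← swapConj_swapConj (f p) r f, ← swapConj_swapConj (f q) s (swapConj (f p) r f),
            hg, ha, hb, swapConj_swapConj, swapConj_swapConj]
    _ ≤ _ := by
        rw [card_product]
        exact Nat.mul_le_mul_left _ (Nat.mul_le_mul (card_samePairs_le _) (card_samePairs_le _))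

theorem div_le_of_switching_bounds {a bl bd m N D u r : ℕ} {c : ℝ} (hc : 0 ≤ c) (ha : 0 < a)
    (hD : 2 ≤ D) (hDN : 2 * D ^ 4 ≤ N) (hNm : N ≤ 2 * m)
    (hloop : bl * (m - 2) ≤ a * r) (hdouble : bd * ((m - 4) * (m - 5)) ≤ a * (u * r))
    (hu : u ≤ D * N) (hr : (r : ℝ) ≤ c * D ^ 3) :
    ((bl + bd : ℕ) : ℝ) / a ≤ 20 * c * D ^ 4 / N := by
  have hD4 : 16 ≤ D ^ 4 := by simpa using Nat.pow_le_pow_left hD 4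
  have hloop' : bl * N ≤ 4 * (a * r) :=
    calc bl * N ≤ bl * (4 * (m - 2)) := Nat.mul_le_mul_left _ (by omega)
      _ = 4 * (bl * (m - 2)) := by ring
      _ ≤ 4 * (a * r) := Nat.mul_le_mul_left _ hloop
  have hdouble' : bd * N * N ≤ 16 * (a * (u * r)) :=
    calc bd * N * N ≤ bd * (4 * (m - 4)) * (4 * (m - 5)) :=
          Nat.mul_le_mul (Nat.mul_le_mul_left _ (by omega)) (by omega)
      _ = 16 * (bd * ((m - 4) * (m - 5))) := by ring
      _ ≤ 16 * (a * (u * r)) := Nat.mul_le_mul_left _ hdouble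
  have hN : (0 : ℝ) < N := by exact_mod_cast (show 0 < N by omega)
  have hD1 : (1 : ℝ) ≤ D := by exact_mod_cast (show 1 ≤ D by omega)
  have hcD : c * (D : ℝ) ^ 3 ≤ c * D ^ 4 :=
    mul_le_mul_of_nonneg_left (pow_le_pow_right₀ hD1 (by norm_num)) hc
  have ha' : (0 : ℝ) ≤ a := Nat.cast_nonneg a
  have hlR : (bl : ℝ) * N ≤ 4 * a * (c * D ^ 4) := by
    have : (bl : ℝ) * N ≤ 4 * (a * r) := by exact_mod_cast hloop'
    nlinarith
  have hdR : (bd : ℝ) * N ≤ 16 * a * (c * D ^ 4) := by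
    have h1 : (bd : ℝ) * N * N ≤ 16 * (a * (u * r)) := by exact_mod_cast hdouble'
    have h2 : (u : ℝ) * r ≤ (D * N) * (c * D ^ 3) :=
      mul_le_mul (by exact_mod_cast hu) hr (Nat.cast_nonneg r) (by positivity)
    have h3 : (bd : ℝ) * N * N ≤ 16 * a * (c * D ^ 4) * N := by nlinarith
    exact le_of_mul_le_mul_right h3 hN
  rw [div_le_div_iff₀ (by exact_mod_cast ha) hN]
  push_cast
  linarith

/-- **Corollary (after Lemma 3)**: if `M₂(R) = O(d_max³)` then the probability that there
exists a loop or a double pair is `O(d_max⁴/M)`. -/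
theorem prob_loop_or_double :
    ∀ c : ℝ, 0 < c →
      ∃ C : ℝ, 0 < C ∧ ∃ δ : ℝ, 0 < δ ∧
        ∀ (n : ℕ) (d : Fin n → ℕ) (L R : Finset (Fin n)),
          Disjoint L R → L ∪ R = Finset.univ →
          Even (M n d) →
          M1 d L ≤ M1 d R →
          (dmax d : ℝ) ^ 4 ≤ δ * (M n d : ℝ) →
          (M2 d R : ℝ) ≤ c * (dmax d : ℝ) ^ 3 →
          (((restricted n d L).filter (fun f =>
              0 < numLoops f ∨ 0 < numMixedDoubles L f ∨ 0 < numPureDoubles L f)).card : ℝ) /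
            ((restricted n d L).card : ℝ) ≤ C * (dmax d : ℝ) ^ 4 / (M n d : ℝ) := by
  intro c hc
  refine ⟨20 * c, by positivity, 1 / 2, by norm_num, ?_⟩
  intro n d L R hdisj hunion _ hLR hδ hM2R
  obtain rfl : R = Lᶜ := (IsCompl.compl_eq ⟨hdisj, codisjoint_iff.2 hunion⟩).symm
  set A := restricted n d L
  rcases eq_empty_or_nonempty (A.filter fun f =>
      0 < numLoops f ∨ 0 < numMixedDoubles L f ∨ 0 < numPureDoubles L f) with hbad | ⟨f, hf⟩
  · rw [hbad, card_empty, Nat.cast_zero, zero_div]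
    positivity
  obtain ⟨hfA, hfbad⟩ := mem_filter.1 hf
  have hD := two_le_dmax_of_hasLoop_or_hasDoublePair hfA (hasLoop_or_hasDoublePair hfbad)
  have hMD : 2 * dmax d ^ 4 ≤ M n d := by
    exact_mod_cast (by linarith : (2 * dmax d ^ 4 : ℝ) ≤ M n d)
  calc _ ≤ ((#(A.filter HasLoop) + #(A.filter (HasDoublePair L)) : ℕ) : ℝ) / #A :=
        div_le_div_of_nonneg_right (by exact_mod_cast card_filter_bad_le A) (Nat.cast_nonneg _)
    _ ≤ _ := div_le_of_switching_bounds hc.le (card_pos.2 ⟨f, hfA⟩) hD hMD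
        (M_le_two_mul_M1_compl hLR)
        card_filter_hasLoop_mul_le card_filter_hasDoublePair_mul_le (M2_le_dmax_mul_M d) hM2R

end RandomBGraph
end

section
/- Let d=(d_1,…,d_n) be nonnegative integers with M=∑d_i even and let [n]=L∪R be a partition with M_1(R)≥M_1(L). Then the number of restricted pairings equals |M(L,R,d)| = [M_1(R)]_{M_1(L)} · (M_1(R)−M_1(L))! / (2^t · t!), where t=(M_1(R)−M_1(L))/2 and [x]_k denotes the falling factorial x(x−1)⋯(x−k+1). -/
/-! A restricted pairing is a fixed-point-free involution of the points that sends every point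
in an `L`-bucket to a point in an `R`-bucket. Once the partner `y` of a point `x` is fixed,
composing with the transposition `(x y)` identifies these pairings with the pairings of the
remaining points. Pairing off the `L`-points one at a time, each has as many choices as there
are unused `R`-points, which gives `[M₁(R)]_{M₁(L)}`; the `2t` leftover `R`-points are then
matched freely, in `(2t - 1)‼ = (2t)! / (2^t t!)` ways. -/

open Finset

namespace RandomBGraph

variable {n : ℕ}

/-- the number `t = (M₁(R) - M₁(L))/2` of pure pairs -/
def tP (d : Fin n → ℕ) (L R : Finset (Fin n)) : ℕ := (M1 d R - M1 d L) / 2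

open Equiv (swap)
open Nat

section Pairings

theorem apply_swap_eq_swap_apply {α : Type*} [DecidableEq α] {f : α → α} {x y : α}
    (hf : ∀ z, f (f z) = z) (h : f x = y ∨ f x = x ∧ f y = y) (z : α) :
    f (swap x y z) = swap x y (f z) := by
  grind

variable {α : Type*} [Fintype α] [DecidableEq α]

/-- Perfect matchings of `s` with no pair inside `A`, encoded as involutions of `α` whose fixed
points are exactly the points outside `s`. -/
def pairingsOn (s A : Finset α) : Finset (α → α) :=
  {f | (∀ x, f (f x) = x) ∧ (∀ x, f x = x ↔ x ∉ s) ∧ ∀ x ∈ s ∩ A, f x ∉ A}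

variable {s A : Finset α} {f : α → α} {x y : α}

theorem mem_pairingsOn : f ∈ pairingsOn s A ↔
    (∀ x, f (f x) = x) ∧ (∀ x, f x = x ↔ x ∉ s) ∧ ∀ x ∈ s ∩ A, f x ∉ A := by
  simp [pairingsOn]

theorem pairingsOn_empty (A : Finset α) : pairingsOn ∅ A = {id} := by
  ext f
  simp only [mem_pairingsOn, mem_singleton]
  constructor
  · rintro ⟨-, hfix, -⟩
    exact funext fun x => (hfix x).2 (notMem_empty x)
  · rintro rfl
    simp

theorem card_filter_apply_eq_card_pairingsOn (hx : x ∈ s) (hy : y ∈ s) (hxy : x ≠ y)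
    (hA : x ∈ A → y ∉ A) :
    #{f ∈ pairingsOn s A | f x = y} = #(pairingsOn ((s.erase x).erase y) A) := by
  refine card_nbij' (swap x y ∘ ·) (swap x y ∘ ·) ?_ ?_ ?_ ?_
  · intro f hf
    simp only [coe_filter, Set.mem_ofPred_eq, mem_pairingsOn] at hf
    have := apply_swap_eq_swap_apply hf.1.1 (.inl hf.2)
    simp only [mem_coe, mem_pairingsOn]
    grind
  · intro g hg
    simp only [mem_coe, mem_pairingsOn] at hg
    have hgx : g x = x := (hg.2.1 x).2 (by simp)
    have hgy : g y = y := (hg.2.1 y).2 (by simp)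
    have := apply_swap_eq_swap_apply hg.1 (.inr ⟨hgx, hgy⟩)
    simp only [coe_filter, Set.mem_ofPred_eq, mem_pairingsOn]
    grind
  · intro f _; ext z; simp
  · intro g _; ext z; simp

theorem apply_mem_of_mem_pairingsOn (hf : f ∈ pairingsOn s A) (hx : x ∈ s) :
    f x ∈ s.erase x ∧ (x ∈ A → f x ∉ A) := by
  grind [mem_pairingsOn]

theorem card_pairingsOn_eq_sum {t : Finset α} (hx : x ∈ s) (ht : ∀ f ∈ pairingsOn s A, f x ∈ t)
    (hts : t ⊆ s.erase x) (htA : x ∈ A → Disjoint t A) :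
    #(pairingsOn s A) = ∑ y ∈ t, #(pairingsOn ((s.erase x).erase y) A) := by
  rw [card_eq_sum_card_fiberwise ht]
  refine sum_congr rfl fun y hy => ?_
  obtain ⟨hyx, hys⟩ := mem_erase.mp (hts hy)
  exact card_filter_apply_eq_card_pairingsOn hx hys hyx.symm
    fun hxA => disjoint_left.mp (htA hxA) hy

theorem card_pairingsOn_of_disjoint {t : ℕ} (hA : Disjoint s A) (hs : #s = 2 * t) :
    #(pairingsOn s A) = (2 * t - 1)‼ := by
  induction t generalizing s with
  | zero => simp_all [pairingsOn_empty]
  | succ t ih =>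
    obtain ⟨x, hx⟩ : s.Nonempty := card_pos.mp (by omega)
    have hfiber (y) (hy : y ∈ s.erase x) :
        #(pairingsOn ((s.erase x).erase y) A) = (2 * t - 1)‼ := by
      refine ih (hA.mono_left ((erase_subset _ _).trans (erase_subset _ _))) ?_
      rw [card_erase_of_mem hy, card_erase_of_mem hx, hs]
      omega
    have hxA : x ∉ A := disjoint_left.mp hA hx
    rw [card_pairingsOn_eq_sum hx (fun f hf => (apply_mem_of_mem_pairingsOn hf hx).1) subset_rfl
        (absurd · hxA), sum_congr rfl hfiber, sum_const,
      card_erase_of_mem hx, hs, smul_eq_mul, show 2 * (t + 1) - 1 = 2 * t + 1 by omega,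
      doubleFactorial_add_one]

theorem card_pairingsOn {a t : ℕ} (hA : #(s ∩ A) = a) (hs : #(s \ A) = a + 2 * t) :
    #(pairingsOn s A) = (a + 2 * t).descFactorial a * (2 * t - 1)‼ := by
  induction a generalizing s with
  | zero =>
    rw [Finset.card_eq_zero, ← disjoint_iff_inter_eq_empty] at hA
    rw [card_pairingsOn_of_disjoint hA (by rwa [hA.sdiff_eq_left, zero_add] at hs)]
    simp
  | succ a ih =>
    obtain ⟨x, hx⟩ : (s ∩ A).Nonempty := card_pos.mp (by omega)
    obtain ⟨hxs, hxA⟩ := mem_inter.mp hx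
    have hfiber (y) (hy : y ∈ s \ A) :
        #(pairingsOn ((s.erase x).erase y) A) = (a + 2 * t).descFactorial a * (2 * t - 1)‼ := by
      obtain ⟨hys, hyA⟩ := mem_sdiff.mp hy
      have hy' : y ∉ (s ∩ A).erase x := by grind
      have hx' : x ∉ s \ A := by grind
      refine ih ?_ ?_
      · rw [erase_inter, erase_inter, erase_eq_of_notMem hy', card_erase_of_mem hx, hA,
          Nat.add_sub_cancel]
      · rw [erase_sdiff_comm, erase_sdiff_comm, erase_eq_of_notMem hx', card_erase_of_mem hy, hs]
        omega
    have hpartner (f) (hf : f ∈ pairingsOn s A) : f x ∈ s \ A := by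
      have := apply_mem_of_mem_pairingsOn hf hxs
      grind
    rw [card_pairingsOn_eq_sum hxs hpartner (fun y hy => by grind) fun _ => sdiff_disjoint,
      sum_congr rfl hfiber, sum_const, hs, smul_eq_mul,
      show a + 1 + 2 * t = a + 2 * t + 1 by ring, succ_descFactorial_succ, mul_assoc]

end Pairings

theorem card_filter_fst_mem (d : Fin n → ℕ) (S : Finset (Fin n)) :
    #{p : Pt n d | p.1 ∈ S} = M1 d S := by
  rw [show ({p : Pt n d | p.1 ∈ S} : Finset (Pt n d)) = S.sigma fun _ => univ by ext; simp,
    card_sigma]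
  simp [M1]

theorem card_pt (d : Fin n → ℕ) : Fintype.card (Pt n d) = M n d := by
  simp [Fintype.card_sigma, M]

theorem factorial_two_mul (t : ℕ) : (2 * t)! = 2 ^ t * t ! * (2 * t - 1)‼ := by
  cases t with
  | zero => rfl
  | succ t =>
    rw [show 2 * (t + 1) - 1 = 2 * t + 1 by omega, show 2 * (t + 1) = 2 * t + 1 + 1 by ring,
      factorial_eq_mul_doubleFactorial, show 2 * t + 1 + 1 = 2 * (t + 1) by ring,
      doubleFactorial_two_mul]

theorem restricted_eq_pairingsOn (d : Fin n → ℕ) (L : Finset (Fin n)) :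
    restricted n d L = pairingsOn univ {p : Pt n d | p.1 ∈ L} := by
  ext f
  simp [restricted, mem_pairingsOn]

/-- the total number of restricted pairings is
`[M₁(R)]_{M₁(L)} · (M₁(R) - M₁(L))! / (2^t · t!)`. -/
theorem count_restricted_pairings
    (n : ℕ) (d : Fin n → ℕ) (L R : Finset (Fin n))
    (hdis : Disjoint L R) (hun : L ∪ R = Finset.univ)
    (heven : Even (M n d)) (hlr : M1 d L ≤ M1 d R) :
    ((restricted n d L).card : ℝ) =
      ((M1 d R).descFactorial (M1 d L) : ℝ) * ((M1 d R - M1 d L).factorial : ℝ) /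
        ((2 : ℝ) ^ (tP d L R) * ((tP d L R).factorial : ℝ)) := by
  obtain ⟨k, hk⟩ := heven
  have hM : M n d = M1 d L + M1 d R := by rw [M, ← hun, sum_union hdis]; rfl
  have hRL : M1 d R = M1 d L + 2 * tP d L R := by unfold tP; omega
  have hcard := card_pairingsOn (s := univ) (A := {p : Pt n d | p.1 ∈ L}) (t := tP d L R)
    (by rw [univ_inter, card_filter_fst_mem])
    (by rw [card_univ_sdiff, card_pt, card_filter_fst_mem]; omega)
  rw [restricted_eq_pairingsOn, hcard, hRL, Nat.add_sub_cancel_left, factorial_two_mul]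
  push_cast
  field_simp

end RandomBGraph
end
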